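/- For any integers c_1, …, c_k with k ≥ 2, the left q-deformed Euler continuant satisfies E^♭_k(c_1,…,c_k)_q = [c_k]^♭_q·E^♯_{k−1}(c_1,…,c_{k−1})_q − q^{c_{k−1}−1}·E^♯_{k−2}(c_1,…,c_{k−2})_q, and also E^♭_k(c_1,…,c_k)_q = E^♯_k(c_1,…,c_k)_q − q^{c_k−1}(1 − q)·E^♯_{k−1}(c_1,…,c_{k−1})_q. -/
import Mathlib


noncomputable section

/-- The field ℚ(q) of rational functions over ℚ. -/
abbrev K : Type := RatFunc ℚ

/-- The variable q. -/
def q : K := RatFunc.X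

/-- Right q-integer `[n]^♯` with deformation parameter `x`. -/
def qsX (x : K) (n : ℤ) : K := (1 - x ^ n) / (1 - x)

/-- Left q-integer `[n]^♭` with deformation parameter `x`. -/
def qfX (x : K) (n : ℤ) : K := (1 - x ^ (n - 1) + x ^ n - x ^ (n + 1)) / (1 - x)

/-- Right q-integer `[n]^♯_q`. -/
def qs (n : ℤ) : K := qsX q n

/-- Left q-integer `[n]^♭_q`. -/
def qf (n : ℤ) : K := qfX q n

/-- Right q-deformed Euler continuant `E^♯` (first-row expansion of the
tridiagonal determinant), with parameter `x`. -/
def EsharpX (x : K) : List ℤ → K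
  | [] => 1
  | [c] => qsX x c
  | c :: d :: rest => qsX x c * EsharpX x (d :: rest) - x ^ (c - 1) * EsharpX x rest

/-- Left q-deformed Euler continuant `E^♭` (first-row expansion of the
tridiagonal determinant whose (k,k) entry is the left q-integer), with parameter `x`. -/
def EflatX (x : K) : List ℤ → K
  | [] => 1
  | [c] => qfX x c
  | c :: d :: rest => qsX x c * EflatX x (d :: rest) - x ^ (c - 1) * EflatX x rest

def Esharp (L : List ℤ) : K := EsharpX q L

def Eflat (L : List ℤ) : K := EflatX q L

/-- `E^♯_{j-1}(d_2,…,d_j)` for the input list `(d_1,…,d_j)`, with the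
convention `E^♯_{-1}() = 0` when the list is empty. -/
def EsharpD : List ℤ → K
  | [] => 0
  | _ :: rest => Esharp rest

/-- `E^♭_{j-1}(d_2,…,d_j)` for the input list `(d_1,…,d_j)`, with the
convention `E^♭_{-1}() = 1 - q` when the list is empty. -/
def EflatD : List ℤ → K
  | [] => 1 - q
  | _ :: rest => Eflat rest

/-- Left q-deformed negative continued fraction `[[c_1,…,c_k]]^♭_q`. -/
def nflat : List ℤ → K
  | [] => 0
  | [c] => qf c
  | c :: d :: rest => qs c - q ^ (c - 1) / nflat (d :: rest)

/-- Right q-deformed negative continued fraction `[[c_1,…,c_k]]^♯_q`. -/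
def nsharp : List ℤ → K
  | [] => 0
  | [c] => qs c
  | c :: d :: rest => qs c - q ^ (c - 1) / nsharp (d :: rest)

/-- Left q-deformed regular continued fraction, with alternating parameter `x`, `x⁻¹`. -/
def regFlatX : K → List ℤ → K
  | _, [] => 0
  | x, [a] => qfX x a
  | x, a :: d :: rest => qsX x a + x ^ a / regFlatX x⁻¹ (d :: rest)

/-- Left q-deformed regular continued fraction `[a_1,…,a_{2m}]^♭_q`. -/
def regFlat (L : List ℤ) : K := regFlatX q L

/-- Classical negative continued fraction `[[c_1,…,c_k]] ∈ ℚ`. -/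
def negCF : List ℤ → ℚ
  | [] => 0
  | [c] => c
  | c :: d :: rest => c - 1 / negCF (d :: rest)

/-- Classical regular continued fraction `[a_1,…,a_{2m}] ∈ ℚ`. -/
def regCF : List ℤ → ℚ
  | [] => 0
  | [a] => a
  | a :: d :: rest => a + 1 / regCF (d :: rest)

/-- The matrix σ_{1,q} as an invertible 2×2 matrix over ℚ(q). -/
def σ1 : (Matrix (Fin 2) (Fin 2) K)ˣ where
  val := !![q⁻¹, -q⁻¹; 0, 1]
  inv := !![q, 1; 0, 1]
  val_inv := by
    have hq : (q : K) ≠ 0 := RatFunc.X_ne_zero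
    ext i j
    fin_cases i <;> fin_cases j <;>
      simp [Matrix.mul_apply, Fin.sum_univ_two, inv_mul_cancel₀ hq]
  inv_val := by
    have hq : (q : K) ≠ 0 := RatFunc.X_ne_zero
    ext i j
    fin_cases i <;> fin_cases j <;>
      simp [Matrix.mul_apply, Fin.sum_univ_two, mul_inv_cancel₀ hq]

/-- The matrix σ_{2,q} as an invertible 2×2 matrix over ℚ(q). -/
def σ2 : (Matrix (Fin 2) (Fin 2) K)ˣ where
  val := !![1, 0; 1, q⁻¹]
  inv := !![1, 0; -q, q]
  val_inv := by
    have hq : (q : K) ≠ 0 := RatFunc.X_ne_zero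
    ext i j
    fin_cases i <;> fin_cases j <;>
      simp [Matrix.mul_apply, Fin.sum_univ_two, inv_mul_cancel₀ hq]
  inv_val := by
    have hq : (q : K) ≠ 0 := RatFunc.X_ne_zero
    ext i j
    fin_cases i <;> fin_cases j <;>
      simp [Matrix.mul_apply, Fin.sum_univ_two, mul_inv_cancel₀ hq]

/-- The matrix S_q as an invertible 2×2 matrix over ℚ(q). -/
def Sq : (Matrix (Fin 2) (Fin 2) K)ˣ where
  val := !![0, -q⁻¹; 1, 0]
  inv := !![0, 1; -q, 0]
  val_inv := by
    have hq : (q : K) ≠ 0 := RatFunc.X_ne_zero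
    ext i j
    fin_cases i <;> fin_cases j <;>
      simp [Matrix.mul_apply, Fin.sum_univ_two, inv_mul_cancel₀ hq]
  inv_val := by
    have hq : (q : K) ≠ 0 := RatFunc.X_ne_zero
    ext i j
    fin_cases i <;> fin_cases j <;>
      simp [Matrix.mul_apply, Fin.sum_univ_two, mul_inv_cancel₀ hq]

/-- The product σ_{1,q}^{-c_1}·S_q·σ_{1,q}^{-c_2}·S_q⋯σ_{1,q}^{-c_k}·S_q. -/
def prodCS : List ℤ → (Matrix (Fin 2) (Fin 2) K)ˣ
  | [] => 1
  | c :: rest => σ1 ^ (-c) * Sq * prodCS rest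

/-- The product σ_{1,q}^{-a_1}·σ_{2,q}^{a_2}⋯σ_{1,q}^{-a_{2m-1}}·σ_{2,q}^{a_{2m}}. -/
def prodReg : List ℤ → (Matrix (Fin 2) (Fin 2) K)ˣ
  | [] => 1
  | [a] => σ1 ^ (-a)
  | a :: b :: rest => σ1 ^ (-a) * σ2 ^ b * prodReg rest

/-- The sum a_2 + a_4 + ⋯ of the even-indexed entries. -/
def evenSum : List ℤ → ℤ
  | [] => 0
  | [_] => 0
  | _ :: b :: rest => b + evenSum rest

/-- Möbius action of a 2×2 matrix on ℚ(q). -/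
def mobius (A : Matrix (Fin 2) (Fin 2) K) (x : K) : K :=
  (A 0 0 * x + A 0 1) / (A 1 0 * x + A 1 1)


lemma q_ne_zero : (q : K) ≠ 0 := RatFunc.X_ne_zero

lemma one_sub_q_ne_zero : (1 : K) - q ≠ 0 := by
  intro h
  have hq1 : (q : K) = 1 := by linear_combination -h
  exact Polynomial.X_ne_C (1 : ℚ) (by simpa [q, Polynomial.C_1] using congrArg RatFunc.num hq1)

lemma qf_eq (e : ℤ) : qf e = qs e - q ^ (e - 1) * (1 - q) := by
  have hq := q_ne_zero
  have h1 := one_sub_q_ne_zero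
  rw [qf, qs, qfX, qsX]
  have he : q ^ e = q ^ (e - 1) * q := by
    rw [← zpow_add_one₀ hq]; ring_nf
  have he1 : q ^ (e + 1) = q ^ (e - 1) * q * q := by
    rw [← zpow_add_one₀ hq, ← zpow_add_one₀ hq]; ring_nf
  field_simp
  rw [he, he1]; ring

lemma esharp_last (d e : ℤ) : ∀ cs : List ℤ,
    EsharpX q (cs ++ [d, e])
      = qsX q e * EsharpX q (cs ++ [d]) - q ^ (d - 1) * EsharpX q cs
  | [] => by simp only [List.nil_append, EsharpX]; ring
  | [c] => by simp only [List.cons_append, List.nil_append, EsharpX]; ring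
  | c :: c' :: rest => by
      have h1 := esharp_last d e (c' :: rest)
      have h2 := esharp_last d e rest
      simp only [List.cons_append] at *
      rw [show EsharpX q (c :: c' :: (rest ++ [d, e]))
            = qsX q c * EsharpX q (c' :: (rest ++ [d, e]))
              - q ^ (c - 1) * EsharpX q (rest ++ [d, e]) from rfl,
          h1, h2]
      rcases rest with _ | ⟨r, rs⟩
      · simp only [List.nil_append, EsharpX]; ring
      · simp only [List.cons_append, EsharpX]; ring

lemma eflat_eq (d e : ℤ) : ∀ cs : List ℤ,
    EflatX q (cs ++ [d, e])
      = EsharpX q (cs ++ [d, e]) - q ^ (e - 1) * (1 - q) * EsharpX q (cs ++ [d])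
  | [] => by
      simp only [List.nil_append, EflatX, EsharpX]
      have := qf_eq e
      rw [qf, qs] at this
      rw [this]; ring
  | [c] => by
      simp only [List.cons_append, List.nil_append, EflatX, EsharpX]
      have := qf_eq e
      rw [qf, qs] at this
      rw [this]; ring
  | c :: c' :: rest => by
      have h1 := eflat_eq d e (c' :: rest)
      have h2 := eflat_eq d e rest
      simp only [List.cons_append] at *
      rw [show EflatX q (c :: c' :: (rest ++ [d, e]))
            = qsX q c * EflatX q (c' :: (rest ++ [d, e]))
              - q ^ (c - 1) * EflatX q (rest ++ [d, e]) from rfl,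
          h1, h2]
      rcases rest with _ | ⟨r, rs⟩
      · simp only [List.nil_append, EflatX, EsharpX]; ring
      · simp only [List.cons_append, EflatX, EsharpX]; ring

/-- the two expansion formulas for the left q-deformed Euler continuant
(for k ≥ 2, the list being cs ++ [d, e]). -/
theorem Eflat_expansion (cs : List ℤ) (d e : ℤ) :
    Eflat (cs ++ [d, e]) = qf e * Esharp (cs ++ [d]) - q ^ (d - 1) * Esharp cs
      ∧
    Eflat (cs ++ [d, e])
      = Esharp (cs ++ [d, e]) - q ^ (e - 1) * (1 - q) * Esharp (cs ++ [d]) := by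
  constructor
  · have hB := eflat_eq d e cs
    have hA := esharp_last d e cs
    have hqf := qf_eq e
    simp only [Eflat, Esharp, qf, qs] at *
    rw [hB, hA, hqf]; ring
  · exact eflat_eq d e cs
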